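/- For all integers d ≥ 1, k ≥ 1, all integers r, s_Y, s_Z with 0 ≤ r ≤ k, 0 ≤ s_Y ≤ k, 0 ≤ s_Z ≤ min(k−r, k−s_Y), and every integer q with 3k − r − s = q, where s := s_Y + s_Z, one has ∫_{(B)^{3k−r−s}} h_1(y_0,…,y_{k−1}) · h_1(y_0,…,y_{r−1}, z_0,…,z_{k−r−1}) · h_1(y_0,…,y_{s_Y−1}, z_0,…,z_{s_Z−1}, w_0,…,w_{k−s−1}) dy dz dw ≤ ( (k+1)·((q−k)/2 + 1)² )^d, where B := [−1,1]^d ⊂ ℝ^d. -/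

import Mathlib

open MeasureTheory

open Classical in
/-- The indicator of a proposition, as a real number. -/
noncomputable def ind (p : Prop) : ℝ := if p then 1 else 0

/-- All points of a set `P ⊆ ℝ^d` (with the sup norm) are pairwise within distance `δ`. -/
def closeP {d : ℕ} (δ : ℝ) (P : Set (Fin d → ℝ)) : Prop :=
  ∀ a ∈ P, ∀ b ∈ P, ‖a - b‖ ≤ δ

open Set
open scoped ENNReal

/-! Dropping the constraints that tie `y` to `z` and `w` only increases the integrand, and what is
left factors over `y`, `z`, `w`, so the integral is at most the product of the volumes of the three
sets of clusters in the cube. For the sup norm, `n` points of `[-1,1]^d` form a cluster iff each of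
their `d` coordinate tuples is a cluster in `[-1,1]`, so that volume is the `d`-th power of the
one-dimensional one, which is at most `n + 1`: either all points lie in `[0,1]`, or the smallest
one, `t`, lies in `[-1,0]` and all of them in `[t, t+1]`, and each of these `n + 1` pieces has
volume at most `1`. Finally `(a+1)(b+1) ≤ ((a+b)/2+1)^2` with `a + b = q - k`. -/

theorem ind_nonneg (p : Prop) : 0 ≤ ind p := by
  unfold ind; split_ifs <;> norm_num

theorem ind_mono {p q : Prop} (h : p → q) : ind p ≤ ind q := by
  unfold ind; split_ifs <;> simp_all

theorem ind_mul_ind (p q : Prop) : ind p * ind q = ind (p ∧ q) := by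
  unfold ind; split_ifs <;> simp_all

theorem ind_mem {α : Type*} (s : Set α) (x : α) : ind (x ∈ s) = s.indicator 1 x := by
  unfold ind indicator; rfl

theorem closeP.mono {d : ℕ} {δ : ℝ} {P Q : Set (Fin d → ℝ)} (h : closeP δ P) (hQ : Q ⊆ P) :
    closeP δ Q :=
  fun a ha b hb => h a (hQ ha) b (hQ hb)

theorem closeP_range_iff {ι : Type*} {d : ℕ} {δ : ℝ} (x : ι → Fin d → ℝ) :
    closeP δ (range x) ↔ ∀ i j, ‖x i - x j‖ ≤ δ := by
  simp only [closeP, forall_mem_range]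

theorem closeP_range_iff_abs {ι : Type*} {d : ℕ} {δ : ℝ} (hδ : 0 ≤ δ) (x : ι → Fin d → ℝ) :
    closeP δ (range x) ↔ ∀ i j c, |x i c - x j c| ≤ δ := by
  simp only [closeP_range_iff, pi_norm_le_iff_of_nonneg hδ, Pi.sub_apply, Real.norm_eq_abs]

theorem isClosed_setOf_closeP_range {ι : Type*} (d : ℕ) (δ : ℝ) :
    IsClosed {x : ι → Fin d → ℝ | closeP δ (range x)} := by
  simp only [closeP_range_iff, ofPred_forall]
  exact isClosed_iInter fun i => isClosed_iInter fun j =>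
    isClosed_le (by fun_prop) continuous_const

def clustersAnchoredAt {n : ℕ} (i : Fin n) : Set (Fin n → ℝ) :=
  {y | y i ∈ Icc (-1) 0 ∧ ∀ j, y j ∈ Icc (y i) (y i + 1)}

theorem volume_clustersAnchoredAt_le_one {n : ℕ} (i : Fin n) :
    volume (clustersAnchoredAt i) ≤ 1 := by
  obtain ⟨m, rfl⟩ : ∃ m, n = m + 1 := ⟨n - 1, by have := i.pos; omega⟩
  set G : Set (ℝ × (Fin m → ℝ)) := {p | p.1 ∈ Icc (-1) 0 ∧ ∀ j, p.2 j ∈ Icc p.1 (p.1 + 1)}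
  have hG : MeasurableSet G := by
    simp only [G, mem_Icc, ofPred_and, ofPred_forall]
    measurability
  have hslice (t : ℝ) : volume (Prod.mk t ⁻¹' G) = (Icc (-1) 0).indicator 1 t := by
    by_cases ht : t ∈ Icc (-1 : ℝ) 0
    · have : Prod.mk t ⁻¹' G = univ.pi fun _ => Icc t (t + 1) := by
        ext
        simp only [G, mem_preimage, mem_ofPred_eq, mem_pi, mem_univ, true_implies, ht, true_and]
      rw [this, volume_pi_pi]
      simp [ht]
    · have : Prod.mk t ⁻¹' G = ∅ := by
        ext; simp only [G, mem_preimage, mem_ofPred_eq, ht, false_and, mem_empty_iff_false]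
      simp [this, ht]
  have hpre : clustersAnchoredAt i ⊆
      MeasurableEquiv.piFinSuccAbove (fun _ => ℝ) i ⁻¹' G := fun y hy =>
    ⟨hy.1, fun j => hy.2 _⟩
  calc _ ≤ volume (MeasurableEquiv.piFinSuccAbove (fun _ => ℝ) i ⁻¹' G) := measure_mono hpre
    _ = volume G := (volume_preserving_piFinSuccAbove (fun _ => ℝ) i).measure_preimage_equiv G
    _ = 1 := by
      rw [Measure.volume_eq_prod, Measure.prod_apply hG]
      simp [hslice, lintegral_indicator measurableSet_Icc]

def unitClusters (n : ℕ) : Set (Fin n → ℝ) := {y | ∀ i, y i ∈ Icc (-1) 1 ∧ ∀ j, |y i - y j| ≤ 1}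

theorem volume_unitClusters_le (n : ℕ) : volume (unitClusters n) ≤ n + 1 := by
  have hcover : unitClusters n ⊆ (univ.pi fun _ => Icc 0 1) ∪ ⋃ i, clustersAnchoredAt i := by
    intro y hy
    by_cases hpos : ∀ i, 0 ≤ y i
    · exact Or.inl fun i _ => ⟨hpos i, (hy i).1.2⟩
    push Not at hpos
    obtain ⟨i, hi⟩ := hpos
    have : Nonempty (Fin n) := ⟨i⟩
    obtain ⟨i₀, hmin⟩ := Finite.exists_min y
    refine Or.inr (mem_iUnion.2 ⟨i₀, ⟨(hy i₀).1.1, by linarith [hmin i]⟩, fun j => ⟨hmin j, ?_⟩⟩)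
    linarith [abs_le.1 ((hy j).2 i₀)]
  calc volume (unitClusters n)
      ≤ volume (univ.pi fun _ : Fin n => Icc (0 : ℝ) 1) + ∑ i, volume (clustersAnchoredAt i) :=
        (measure_mono hcover).trans <| (measure_union_le _ _).trans <| by
          gcongr; exact measure_iUnion_fintype_le _ _
    _ ≤ 1 + ∑ _i : Fin n, 1 := by
        gcongr with i
        · rw [volume_pi_pi]; simp
        · exact volume_clustersAnchoredAt_le_one i
    _ = n + 1 := by simp [add_comm]

theorem volume_setOf_forall_coord_mem {ι : Type*} [Fintype ι] (s : Set (ι → ℝ)) (d : ℕ) :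
    volume {x : ι → Fin d → ℝ | ∀ c, (fun i => x i c) ∈ s} = volume s ^ d := by
  induction d with
  | zero => simp [volume_pi, Measure.pi_univ]
  | succ d ih =>
    let e : (ι → Fin (d + 1) → ℝ) ≃ᵐ (ι → ℝ) × (ι → Fin d → ℝ) :=
      (MeasurableEquiv.piCongrRight fun _ => MeasurableEquiv.piFinSuccAbove (fun _ => ℝ) 0).trans
        (MeasurableEquiv.arrowProdEquivProdArrow ℝ (Fin d → ℝ) ι)
    have he : MeasurePreserving e :=
      (volume_measurePreserving_arrowProdEquivProdArrow ℝ (Fin d → ℝ) ι).comp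
        (volume_preserving_pi fun _ => volume_preserving_piFinSuccAbove (fun _ => ℝ) 0)
    have hpre : {x : ι → Fin (d + 1) → ℝ | ∀ c, (fun i => x i c) ∈ s} =
        e ⁻¹' (s ×ˢ {x : ι → Fin d → ℝ | ∀ c, (fun i => x i c) ∈ s}) := by
      ext x
      simp only [mem_ofPred_eq, Fin.forall_fin_succ, mem_preimage, mem_prod]
      rfl
    rw [hpre, he.measure_preimage_equiv, Measure.volume_eq_prod, Measure.prod_prod, ih, pow_succ']

abbrev cubeConfigs (n d : ℕ) : Set (Fin n → Fin d → ℝ) :=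
  univ.pi fun _ => univ.pi fun _ => Icc (-1) 1

def clusters (n d : ℕ) : Set (Fin n → Fin d → ℝ) := {x | closeP 1 (range x)}

theorem clusters_inter_cubeConfigs (n d : ℕ) :
    clusters n d ∩ cubeConfigs n d = {x | ∀ c, (fun i => x i c) ∈ unitClusters n} := by
  ext x
  simp only [clusters, closeP_range_iff_abs zero_le_one, unitClusters, mem_inter_iff, mem_pi,
    mem_univ, true_implies, mem_ofPred_eq]
  exact ⟨fun h c i => ⟨h.2 i c, fun j => h.1 i j c⟩,
    fun h => ⟨fun i j c => (h c i).2 j, fun i c => (h c i).1⟩⟩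

theorem measureReal_clusters_inter_cubeConfigs_le (n d : ℕ) :
    volume.real (clusters n d ∩ cubeConfigs n d) ≤ ((n : ℝ) + 1) ^ d := by
  have h : volume (clusters n d ∩ cubeConfigs n d) ≤ ((n : ℝ≥0∞) + 1) ^ d := by
    rw [clusters_inter_cubeConfigs, volume_setOf_forall_coord_mem]
    gcongr
    exact volume_unitClusters_le n
  simpa [measureReal_def, ENNReal.toReal_add] using ENNReal.toReal_mono (by finiteness) h

theorem isCompact_cubeConfigs (n d : ℕ) : IsCompact (cubeConfigs n d) :=
  isCompact_univ_pi fun _ => isCompact_univ_pi fun _ => isCompact_Icc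

theorem measurableSet_clusters (n d : ℕ) : MeasurableSet (clusters n d) :=
  (isClosed_setOf_closeP_range d 1).measurableSet

theorem setIntegral_le_of_le_ind_closeP (k a b d : ℕ)
    (f : (Fin k → Fin d → ℝ) × (Fin a → Fin d → ℝ) × (Fin b → Fin d → ℝ) → ℝ)
    (hf₀ : ∀ p, 0 ≤ f p) (hf : ∀ p, f p ≤
      ind (closeP 1 (range p.1)) * ind (closeP 1 (range p.2.1)) * ind (closeP 1 (range p.2.2))) :
    ∫ p in cubeConfigs k d ×ˢ (cubeConfigs a d ×ˢ cubeConfigs b d), f p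
      ≤ ((k : ℝ) + 1) ^ d * (((a : ℝ) + 1) ^ d * ((b : ℝ) + 1) ^ d) := by
  have hT := (measurableSet_clusters k d).prod
    ((measurableSet_clusters a d).prod (measurableSet_clusters b d))
  have hA : volume (cubeConfigs k d ×ˢ (cubeConfigs a d ×ˢ cubeConfigs b d)) ≠ ⊤ := by
    simp only [Measure.volume_eq_prod, Measure.prod_prod]
    exact ENNReal.mul_ne_top (isCompact_cubeConfigs k d).measure_ne_top
      (ENNReal.mul_ne_top (isCompact_cubeConfigs a d).measure_ne_top
        (isCompact_cubeConfigs b d).measure_ne_top)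
  have hfT (p) : f p ≤ (clusters k d ×ˢ (clusters a d ×ˢ clusters b d)).indicator 1 p := by
    rw [← ind_mem, mem_prod, mem_prod, ← and_assoc, ← ind_mul_ind, ← ind_mul_ind]
    exact hf p
  refine (integral_mono_of_nonneg (ae_of_all _ hf₀) ?_ (ae_of_all _ hfT)).trans ?_
  · exact (integrableOn_const hA).indicator hT
  rw [integral_indicator_one hT, measureReal_restrict_apply hT, prod_inter_prod, prod_inter_prod,
    Measure.volume_eq_prod, measureReal_prod_prod, Measure.volume_eq_prod, measureReal_prod_prod]
  gcongr <;> exact measureReal_clusters_inter_cubeConfigs_le _ d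

theorem pow_mul_pow_mul_pow_le_am_gm (k a b d : ℕ) :
    ((k : ℝ) + 1) ^ d * (((a : ℝ) + 1) ^ d * ((b : ℝ) + 1) ^ d) ≤
      (((k : ℝ) + 1) * (((a : ℝ) + b) / 2 + 1) ^ 2) ^ d := by
  rw [← mul_pow, ← mul_pow]
  gcongr
  nlinarith [sq_nonneg ((a : ℝ) - b)]

theorem stmt13_general (d k r sY sZ q : ℕ)
    (hr : r ≤ k) (hsY : sY ≤ k) (hsZ : sZ ≤ min (k - r) (k - sY))
    (hq : 3 * k - r - (sY + sZ) = q) :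
    (∫ p in ((Set.univ.pi fun _ : Fin k =>
                (Set.univ.pi fun _ : Fin d => Set.Icc (-1 : ℝ) 1)) ×ˢ
             ((Set.univ.pi fun _ : Fin (k - r) =>
                (Set.univ.pi fun _ : Fin d => Set.Icc (-1 : ℝ) 1)) ×ˢ
              (Set.univ.pi fun _ : Fin (k - (sY + sZ)) =>
                (Set.univ.pi fun _ : Fin d => Set.Icc (-1 : ℝ) 1)))),
      ind (closeP 1 (Set.range p.1)) *
      ind (closeP 1 ((p.1 '' {i : Fin k | (i : ℕ) < r}) ∪ Set.range p.2.1)) *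
      ind (closeP 1 ((p.1 '' {i : Fin k | (i : ℕ) < sY}) ∪
                     (p.2.1 '' {i : Fin (k - r) | (i : ℕ) < sZ}) ∪ Set.range p.2.2)))
      ≤ (((k : ℝ) + 1) * (((q : ℝ) - (k : ℝ)) / 2 + 1) ^ 2) ^ d := by
  have hq' : (q : ℝ) - k = ((k - r : ℕ) : ℝ) + ((k - (sY + sZ) : ℕ) : ℝ) := by
    rw [show q = k + (k - r) + (k - (sY + sZ)) by omega]
    push_cast
    ring
  rw [hq']
  refine le_trans ?_ (pow_mul_pow_mul_pow_le_am_gm k _ _ d)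
  have h_drop {P Q : Set (Fin d → ℝ)} : ind (closeP 1 (P ∪ Q)) ≤ ind (closeP 1 Q) :=
    ind_mono fun h => h.mono subset_union_right
  refine setIntegral_le_of_le_ind_closeP k _ _ d _
    (fun p => mul_nonneg (mul_nonneg (ind_nonneg _) (ind_nonneg _)) (ind_nonneg _)) fun p => ?_
  exact mul_le_mul (mul_le_mul le_rfl h_drop (ind_nonneg _) (ind_nonneg _)) h_drop
    (ind_nonneg _) (mul_nonneg (ind_nonneg _) (ind_nonneg _))

/-- For all integers `d ≥ 1`, `k ≥ 1`, `0 ≤ r ≤ k`, `0 ≤ s_Y ≤ k`,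
`0 ≤ s_Z ≤ min(k−r, k−s_Y)`, with `s := s_Y + s_Z` and `q := 3k − r − s`,
`∫_{(B)^{3k−r−s}} h_1(y) · h_1(y_{<r}, z) · h_1(y_{<s_Y}, z_{<s_Z}, w) dy dz dw
  ≤ ((k+1)((q−k)/2 + 1)²)^d`, where `B = [−1,1]^d ⊂ ℝ^d` with the `ℓ^∞` norm. -/
theorem stmt13 (d k r sY sZ q : ℕ) (hd : 1 ≤ d) (hk : 1 ≤ k)
    (hr : r ≤ k) (hsY : sY ≤ k) (hsZ : sZ ≤ min (k - r) (k - sY))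
    (hq : 3 * k - r - (sY + sZ) = q) :
    (∫ p in ((Set.univ.pi fun _ : Fin k =>
                (Set.univ.pi fun _ : Fin d => Set.Icc (-1 : ℝ) 1)) ×ˢ
             ((Set.univ.pi fun _ : Fin (k - r) =>
                (Set.univ.pi fun _ : Fin d => Set.Icc (-1 : ℝ) 1)) ×ˢ
              (Set.univ.pi fun _ : Fin (k - (sY + sZ)) =>
                (Set.univ.pi fun _ : Fin d => Set.Icc (-1 : ℝ) 1)))),
      ind (closeP 1 (Set.range p.1)) *
      ind (closeP 1 ((p.1 '' {i : Fin k | (i : ℕ) < r}) ∪ Set.range p.2.1)) *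
      ind (closeP 1 ((p.1 '' {i : Fin k | (i : ℕ) < sY}) ∪
                     (p.2.1 '' {i : Fin (k - r) | (i : ℕ) < sZ}) ∪ Set.range p.2.2)))
      ≤ (((k : ℝ) + 1) * (((q : ℝ) - (k : ℝ)) / 2 + 1) ^ 2) ^ d :=
  stmt13_general d k r sY sZ q hr hsY hsZ hq
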